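/- arXiv:1504.01167 — 2 statements merged into one kernel-verified Lean document; each statement's English description precedes it below -/
import Mathlib

section
/- Let n be a natural number and let f be a Boolean function from {-1,1}^n to {-1,1}. A coefficient vector a : Finset (Fin n) → ℝ satisfies f(x) · ∑_S a(S) · χ_S(x) > 0 for all points x of {-1,1}^n if and only if there exists a vector k : ({-1,1}^n) → ℝ with k(x) > 0 for all x such that a(S) = 2^{-n} · ∑_{x} χ_S(x) · f(x) · k(x) for every subset S ⊆ Fin n. (All solutions of the sign-representation system Q_f a > 0 are of the form a = 2^{-n} D_n Y_f k with arbitrary k > 0, where Y_f = diag(f).) -/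
open Finset

noncomputable def cube (n : ℕ) : Finset (Fin n → ℝ) :=
  letI := Classical.decEq (Fin n → ℝ)
  (Finset.univ : Finset (Fin n → Bool)).image (fun b i => if b i then 1 else -1)

noncomputable def chi {n : ℕ} (S : Finset (Fin n)) (x : Fin n → ℝ) : ℝ :=
  ∏ i ∈ S, x i

lemma emb_inj (n : ℕ) : Function.Injective
    (fun (b : Fin n → Bool) (i : Fin n) => if b i then (1:ℝ) else -1) := by
  intro b c h
  funext i
  have := congrFun h i
  by_cases hb : b i <;> by_cases hc : c i <;> simp [hb, hc] at this ⊢ <;> norm_num at this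

lemma cube_sum {n : ℕ} (F : (Fin n → ℝ) → ℝ) :
    ∑ x ∈ cube n, F x = ∑ b : Fin n → Bool, F (fun i => if b i then 1 else -1) := by
  letI := Classical.decEq (Fin n → ℝ)
  rw [cube, Finset.sum_image]
  intro b _ c _ h
  exact emb_inj n h

lemma cube_pm {n : ℕ} {x : Fin n → ℝ} (hx : x ∈ cube n) (i : Fin n) :
    x i = 1 ∨ x i = -1 := by
  classical
  simp only [cube, Finset.mem_image] at hx
  obtain ⟨b, _, rfl⟩ := hx
  by_cases h : b i <;> simp [h]

lemma cube_sq {n : ℕ} {x : Fin n → ℝ} (hx : x ∈ cube n) (i : Fin n) :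
    x i * x i = 1 := by
  rcases cube_pm hx i with h | h <;> rw [h] <;> norm_num

lemma sum_chi {n : ℕ} (U : Finset (Fin n)) :
    ∑ x ∈ cube n, chi U x = if U = ∅ then (2:ℝ)^n else 0 := by
  classical
  rw [cube_sum]
  have h1 : ∀ b : Fin n → Bool, chi U (fun i => if b i then (1:ℝ) else -1)
      = ∏ i : Fin n, (if i ∈ U then (if b i then (1:ℝ) else -1) else 1) := by
    intro b
    rw [chi, Finset.prod_ite_mem, Finset.univ_inter]
  simp_rw [h1]
  have key : ∑ b : Fin n → Bool, ∏ i : Fin n,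
      (if i ∈ U then (if b i then (1:ℝ) else -1) else 1)
      = ∏ i : Fin n, ∑ c : Bool, (if i ∈ U then (if c then (1:ℝ) else -1) else 1) := by
    rw [Finset.prod_univ_sum, ← Fintype.piFinset_univ]
  rw [key]
  have factor : ∀ i : Fin n, (∑ c : Bool, (if i ∈ U then (if c then (1:ℝ) else -1) else 1))
      = if i ∈ U then 0 else 2 := by
    intro i
    by_cases h : i ∈ U <;> simp [h]
  simp_rw [factor]
  by_cases hU : U = ∅
  · simp [hU]
  · rw [if_neg hU]
    obtain ⟨i0, hi0⟩ := Finset.nonempty_iff_ne_empty.mpr hU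
    exact Finset.prod_eq_zero (Finset.mem_univ i0) (by simp [hi0])

lemma chi_mul {n : ℕ} {x : Fin n → ℝ} (hx : x ∈ cube n) (S T : Finset (Fin n)) :
    chi S x * chi T x = chi (symmDiff S T) x := by
  classical
  have d1 : Disjoint (S \ T) (S ∩ T) := Finset.disjoint_sdiff_inter S T
  have d2 : Disjoint (T \ S) (T ∩ S) := Finset.disjoint_sdiff_inter T S
  have hS : chi S x = chi (S \ T) x * chi (S ∩ T) x := by
    rw [chi, chi, chi, ← Finset.prod_union d1, Finset.sdiff_union_inter]
  have hT : chi T x = chi (T \ S) x * chi (S ∩ T) x := by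
    rw [chi, chi, chi, Finset.inter_comm, ← Finset.prod_union d2, Finset.sdiff_union_inter]
  have hsq : chi (S ∩ T) x * chi (S ∩ T) x = 1 := by
    rw [chi, ← Finset.prod_mul_distrib]
    exact Finset.prod_eq_one fun i _ => cube_sq hx i
  have hsymm : chi (symmDiff S T) x = chi (S \ T) x * chi (T \ S) x := by
    rw [chi, chi, chi, ← Finset.prod_union disjoint_sdiff_sdiff, symmDiff_def,
      Finset.sup_eq_union]
  rw [hS, hT, hsymm,
    show (chi (S \ T) x * chi (S ∩ T) x) * (chi (T \ S) x * chi (S ∩ T) x)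
      = (chi (S \ T) x * chi (T \ S) x) * (chi (S ∩ T) x * chi (S ∩ T) x) from by ring,
    hsq, mul_one]

lemma orth1 {n : ℕ} (S T : Finset (Fin n)) :
    ∑ x ∈ cube n, chi S x * chi T x = if S = T then (2:ℝ)^n else 0 := by
  classical
  rw [Finset.sum_congr rfl (fun x hx => chi_mul hx S T), sum_chi]
  congr 1
  simp [← Finset.bot_eq_empty, symmDiff_eq_bot]

lemma orth2 {n : ℕ} {x y : Fin n → ℝ} (hx : x ∈ cube n) (hy : y ∈ cube n) :
    ∑ S : Finset (Fin n), chi S x * chi S y = if x = y then (2:ℝ)^n else 0 := by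
  classical
  have h1 : ∀ S : Finset (Fin n), chi S x * chi S y = ∏ i ∈ S, (x i * y i) := by
    intro S; rw [chi, chi, Finset.prod_mul_distrib]
  simp_rw [h1]
  have h2 : ∑ S : Finset (Fin n), ∏ i ∈ S, (x i * y i)
      = ∑ S ∈ (Finset.univ : Finset (Fin n)).powerset,
          (∏ i ∈ S, (x i * y i)) * ∏ i ∈ Finset.univ \ S, (1:ℝ) := by
    rw [Finset.powerset_univ]
    simp
  rw [h2, ← Finset.prod_add]
  by_cases hxy : x = y
  · subst hxy
    rw [if_pos rfl]
    have : ∀ i : Fin n, x i * x i + 1 = 2 := fun i => by rw [cube_sq hx i]; norm_num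
    simp_rw [this]
    simp
  · rw [if_neg hxy]
    have : ∃ i, x i ≠ y i := by
      by_contra h
      push_neg at h
      exact hxy (funext h)
    obtain ⟨i0, hi0⟩ := this
    apply Finset.prod_eq_zero (Finset.mem_univ i0)
    rcases cube_pm hx i0 with h1 | h1 <;> rcases cube_pm hy i0 with h2 | h2
    · exact absurd (h1.trans h2.symm) hi0
    · rw [h1, h2]; norm_num
    · rw [h1, h2]; norm_num
    · exact absurd (h1.trans h2.symm) hi0

/-- All solutions of the sign-representation system `Q_f a > 0` are of the form
`a = 2^{-n} D_n Y_f k` with arbitrary positive `k`, where `Y_f = diag(f)`. -/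
theorem sign_representation_solutions (n : ℕ) (f : (Fin n → ℝ) → ℝ)
    (hf : ∀ x ∈ cube n, f x = 1 ∨ f x = -1) (a : Finset (Fin n) → ℝ) :
    (∀ x ∈ cube n, f x * ∑ S : Finset (Fin n), a S * chi S x > 0) ↔
      ∃ k : (Fin n → ℝ) → ℝ, (∀ x ∈ cube n, k x > 0) ∧
        ∀ S : Finset (Fin n),
          a S = ((2 : ℝ) ^ n)⁻¹ * ∑ x ∈ cube n, chi S x * f x * k x := by
  classical
  have h2n : ((2:ℝ)^n) ≠ 0 := by positivity
  have hf2 : ∀ x ∈ cube n, f x * f x = 1 := by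
    intro x hx; rcases hf x hx with h | h <;> rw [h] <;> norm_num
  constructor
  · intro hpos
    refine ⟨fun x => f x * ∑ S : Finset (Fin n), a S * chi S x, fun x hx => hpos x hx, ?_⟩
    intro S
    have step : ∀ x ∈ cube n,
        chi S x * f x * (f x * ∑ T : Finset (Fin n), a T * chi T x)
        = ∑ T : Finset (Fin n), a T * (chi S x * chi T x) := by
      intro x hx
      rw [show chi S x * f x * (f x * ∑ T : Finset (Fin n), a T * chi T x)
          = (f x * f x) * (chi S x * ∑ T : Finset (Fin n), a T * chi T x) from by ring,
        hf2 x hx, one_mul, Finset.mul_sum]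
      exact Finset.sum_congr rfl fun T _ => by ring
    rw [Finset.sum_congr rfl step, Finset.sum_comm]
    have inner : ∀ T : Finset (Fin n),
        ∑ x ∈ cube n, a T * (chi S x * chi T x) = a T * (if S = T then (2:ℝ)^n else 0) := by
      intro T
      rw [← Finset.mul_sum, orth1]
    rw [Finset.sum_congr rfl fun T _ => inner T]
    simp only [mul_ite, mul_zero, Finset.sum_ite_eq, Finset.mem_univ, if_true]
    rw [mul_comm (a S), ← mul_assoc, inv_mul_cancel₀ h2n, one_mul]
  · rintro ⟨k, hk, ha⟩
    intro x hx
    have key : ∑ S : Finset (Fin n), a S * chi S x = f x * k x := by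
      simp_rw [ha]
      have step : ∀ S : Finset (Fin n),
          (((2:ℝ)^n)⁻¹ * ∑ y ∈ cube n, chi S y * f y * k y) * chi S x
          = ((2:ℝ)^n)⁻¹ * ∑ y ∈ cube n, (f y * k y) * (chi S x * chi S y) := by
        intro S
        rw [mul_assoc, Finset.sum_mul]
        congr 1
        exact Finset.sum_congr rfl fun y _ => by ring
      rw [Finset.sum_congr rfl fun S _ => step S, ← Finset.mul_sum, Finset.sum_comm]
      have inner : ∀ y ∈ cube n,
          ∑ S : Finset (Fin n), (f y * k y) * (chi S x * chi S y)
          = if x = y then (f y * k y) * (2:ℝ)^n else 0 := by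
        intro y hy
        rw [← Finset.mul_sum, orth2 hx hy, mul_ite, mul_zero]
      rw [Finset.sum_congr rfl inner, Finset.sum_ite_eq (cube n) x (fun y => f y * k y * (2:ℝ)^n),
        if_pos hx,
        show ((2:ℝ)^n)⁻¹ * (f x * k x * (2:ℝ)^n) = (((2:ℝ)^n)⁻¹ * (2:ℝ)^n) * (f x * k x) from by
          ring,
        inv_mul_cancel₀ h2n, one_mul]
    rw [key, ← mul_assoc, hf2 x hx, one_mul]
    exact hk x hx
end

section
/- (Lemma 1.) Let n be a natural number, let f be a Boolean function from {-1,1}^n to {-1,1}, and let M be a set of subsets of Fin n (a set of monomials, indexing the columns A of Q_f; the remaining columns form B). Then there exists a vector k : ({-1,1}^n) → ℝ with k(x) > 0 for all x such that ∑_x k(x) · f(x) · χ_S(x) = 0 for every subset S ∉ M, if and only if there exists a vector r : ({-1,1}^n) → ℝ with r(x) > 0 for all x such that the coefficient vector a defined by a(S) = ∑_x f(x) · χ_S(x) · r(x) for S ∈ M and a(S) = 0 for S ∉ M satisfies f(x) · ∑_S a(S) · χ_S(x) > 0 for all points x of {-1,1}^n. -/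
open Finset
open scoped symmDiff

/-- The canonical parametrization of the cube by Boolean vectors. -/
def toCube {n : ℕ} (b : Fin n → Bool) : Fin n → ℝ := fun i => if b i then 1 else -1

lemma toCube_inj {n : ℕ} : Function.Injective (toCube (n := n)) := by
  intro b c h
  funext i
  have := congrFun h i
  simp only [toCube] at this
  cases hb : b i <;> cases hc : c i <;> simp [hb, hc] at this ⊢ <;> norm_num at this

lemma cube_eq (n : ℕ) : cube n = (Finset.univ : Finset (Fin n → Bool)).image toCube := by
  rw [cube]
  congr 1
  exact Subsingleton.elim _ _

lemma sum_cube {n : ℕ} (g : (Fin n → ℝ) → ℝ) :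
    ∑ x ∈ cube n, g x = ∑ b : Fin n → Bool, g (toCube b) := by
  rw [cube_eq, Finset.sum_image (fun b _ c _ h => toCube_inj h)]

lemma mem_cube {n : ℕ} {x : Fin n → ℝ} (hx : x ∈ cube n) : ∃ b, x = toCube b := by
  rw [cube_eq] at hx
  simp only [Finset.mem_image, Finset.mem_univ, true_and] at hx
  obtain ⟨b, hb⟩ := hx
  exact ⟨b, hb.symm⟩

lemma toCube_mem {n : ℕ} (b : Fin n → Bool) : toCube b ∈ cube n := by
  rw [cube_eq]
  exact Finset.mem_image.mpr ⟨b, Finset.mem_univ b, rfl⟩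

/-- Sum of a single monomial over the cube. -/
lemma sum_monomial {n : ℕ} (U : Finset (Fin n)) :
    ∑ b : Fin n → Bool, ∏ i ∈ U, (if b i then (1:ℝ) else -1)
      = if U = ∅ then 2 ^ n else 0 := by
  classical
  have h1 : ∀ b : Fin n → Bool, ∏ i ∈ U, (if b i then (1:ℝ) else -1)
      = ∏ i : Fin n, (if i ∈ U then (if b i then (1:ℝ) else -1) else 1) := by
    intro b
    rw [Finset.prod_ite_mem, Finset.univ_inter]
  simp only [h1]
  have key := Finset.prod_univ_sum (t := fun _ : Fin n => (univ : Finset Bool))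
    (f := fun i c => if i ∈ U then (if c then (1:ℝ) else -1) else 1)
  rw [Fintype.piFinset_univ] at key
  rw [← key]
  have h2 : ∀ i : Fin n, (∑ c : Bool, if i ∈ U then (if c then (1:ℝ) else -1) else 1)
      = if i ∈ U then 0 else 2 := by
    intro i
    rw [Fintype.sum_bool]
    by_cases h : i ∈ U <;> simp [h] <;> norm_num
  rw [Finset.prod_congr rfl (fun i _ => h2 i)]
  by_cases hU : U = ∅
  · simp [hU]
  · obtain ⟨i, hi⟩ := Finset.nonempty_iff_ne_empty.2 hU
    rw [if_neg hU]
    exact Finset.prod_eq_zero (Finset.mem_univ i) (by simp [hi])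

lemma chi_mul_chi {n : ℕ} (S T : Finset (Fin n)) (b : Fin n → Bool) :
    chi S (toCube b) * chi T (toCube b)
      = ∏ i ∈ S ∆ T, (if b i then (1:ℝ) else -1) := by
  classical
  set v : Fin n → ℝ := fun i => if b i then (1:ℝ) else -1 with hv
  have hchi : ∀ U : Finset (Fin n), chi U (toCube b) = ∏ i ∈ U, v i := fun U => rfl
  rw [hchi, hchi]
  have hS : ∏ i ∈ S, v i = (∏ i ∈ S \ T, v i) * ∏ i ∈ S ∩ T, v i := by
    rw [← Finset.prod_union (Finset.disjoint_sdiff_inter S T), Finset.sdiff_union_inter]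
  have hT : ∏ i ∈ T, v i = (∏ i ∈ T \ S, v i) * ∏ i ∈ S ∩ T, v i := by
    rw [Finset.inter_comm,
      ← Finset.prod_union (Finset.disjoint_sdiff_inter T S), Finset.sdiff_union_inter]
  have hsq : (∏ i ∈ S ∩ T, v i) * ∏ i ∈ S ∩ T, v i = 1 := by
    rw [← Finset.prod_mul_distrib]
    refine Finset.prod_eq_one fun i _ => ?_
    simp only [hv]
    cases b i <;> norm_num
  have hsd : S ∆ T = (S \ T) ∪ (T \ S) := by
    rw [symmDiff_def, Finset.sup_eq_union]
  rw [hS, hT, hsd, Finset.prod_union disjoint_sdiff_sdiff]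
  calc ((∏ i ∈ S \ T, v i) * ∏ i ∈ S ∩ T, v i) * ((∏ i ∈ T \ S, v i) * ∏ i ∈ S ∩ T, v i)
      = ((∏ i ∈ S \ T, v i) * ∏ i ∈ T \ S, v i)
          * ((∏ i ∈ S ∩ T, v i) * ∏ i ∈ S ∩ T, v i) := by ring
    _ = _ := by rw [hsq, mul_one]

/-- Column orthogonality: `∑_{x ∈ cube} χ_S(x) χ_T(x) = 2^n δ_{S,T}`. -/
lemma orth_col {n : ℕ} (S T : Finset (Fin n)) :
    ∑ x ∈ cube n, chi S x * chi T x = if S = T then (2:ℝ) ^ n else 0 := by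
  classical
  rw [sum_cube (fun x => chi S x * chi T x)]
  simp only [chi_mul_chi]
  rw [sum_monomial]
  have : S ∆ T = ∅ ↔ S = T := by
    rw [← Finset.bot_eq_empty, symmDiff_eq_bot]
  exact if_congr this rfl rfl

/-- Row orthogonality: `∑_S χ_S(x) χ_S(y) = 2^n δ_{x,y}` for cube points. -/
lemma orth_row {n : ℕ} (b c : Fin n → Bool) :
    ∑ S : Finset (Fin n), chi S (toCube b) * chi S (toCube c)
      = if b = c then (2:ℝ) ^ n else 0 := by
  classical
  set u : Fin n → ℝ := fun i => toCube b i * toCube c i with hu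
  have h1 : ∀ S : Finset (Fin n), chi S (toCube b) * chi S (toCube c) = ∏ i ∈ S, u i := by
    intro S
    rw [chi, chi, ← Finset.prod_mul_distrib]
  simp only [h1]
  have key : ∏ i : Fin n, (u i + 1)
      = ∑ S ∈ (univ : Finset (Fin n)).powerset, ∏ i ∈ S, u i := by
    rw [Finset.prod_add]
    exact Finset.sum_congr rfl fun S _ => by simp
  rw [← Finset.powerset_univ, ← key]
  have hu2 : ∀ i : Fin n, u i + 1 = if b i = c i then 2 else 0 := by
    intro i
    simp only [hu, toCube]
    cases b i <;> cases c i <;> norm_num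
  rw [Finset.prod_congr rfl fun i _ => hu2 i]
  by_cases h : b = c
  · simp [h]
  · rw [if_neg h]
    obtain ⟨i, hi⟩ : ∃ i, b i ≠ c i := by
      by_contra hcon
      push_neg at hcon
      exact h (funext hcon)
    exact Finset.prod_eq_zero (Finset.mem_univ i) (by simp [hi])

open scoped Classical in
/-- Lemma 1 of the paper: there is a positive vector `k` with `Bᵀk = 0` (where
`B` consists of the columns of `Q_f` indexed by monomials outside `M`) iff
`a = [A 0]ᵀ r` for some positive `r` is a solution of `Q_f a > 0`, i.e. the
coefficient vector `a(S) = ∑_x f(x) χ_S(x) r(x)` for `S ∈ M` and `a(S) = 0`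
otherwise sign-represents `f`. -/
theorem lemma_one (n : ℕ) (f : (Fin n → ℝ) → ℝ)
    (hf : ∀ x ∈ cube n, f x = 1 ∨ f x = -1) (M : Set (Finset (Fin n))) :
    (∃ k : (Fin n → ℝ) → ℝ, (∀ x ∈ cube n, k x > 0) ∧
        ∀ S : Finset (Fin n), S ∉ M → ∑ x ∈ cube n, k x * f x * chi S x = 0) ↔
      (∃ r : (Fin n → ℝ) → ℝ, (∀ x ∈ cube n, r x > 0) ∧
        ∀ x ∈ cube n,
          f x * ∑ S : Finset (Fin n),
            (if S ∈ M then ∑ y ∈ cube n, f y * chi S y * r y else 0) * chi S x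
            > 0) := by
  constructor
  · rintro ⟨k, hk, hk0⟩
    refine ⟨k, hk, ?_⟩
    intro x hx
    obtain ⟨b, rfl⟩ := mem_cube hx
    have hite : ∀ S : Finset (Fin n),
        (if S ∈ M then ∑ y ∈ cube n, f y * chi S y * k y else 0)
          = ∑ y ∈ cube n, f y * chi S y * k y := by
      intro S
      by_cases hS : S ∈ M
      · rw [if_pos hS]
      · rw [if_neg hS, eq_comm, ← hk0 S hS]
        exact Finset.sum_congr rfl fun y _ => by ring
    simp only [hite]
    have hswap :
        ∑ S : Finset (Fin n), (∑ y ∈ cube n, f y * chi S y * k y) * chi S (toCube b)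
          = ∑ y ∈ cube n, f y * k y
              * ∑ S : Finset (Fin n), chi S y * chi S (toCube b) := by
      simp only [Finset.sum_mul, Finset.mul_sum]
      rw [Finset.sum_comm]
      exact Finset.sum_congr rfl fun y _ => Finset.sum_congr rfl fun S _ => by ring
    rw [hswap]
    have hdelta : ∀ y ∈ cube n,
        f y * k y * ∑ S : Finset (Fin n), chi S y * chi S (toCube b)
          = if y = toCube b then f y * k y * 2 ^ n else 0 := by
      intro y hy
      obtain ⟨c, rfl⟩ := mem_cube hy
      rw [orth_row]
      by_cases h : c = b
      · subst h
        rw [if_pos rfl, if_pos rfl]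
      · rw [if_neg h, if_neg (fun hh => h (toCube_inj hh)), mul_zero]
    rw [Finset.sum_congr rfl hdelta, Finset.sum_ite_eq' (cube n) (toCube b)
      (fun y => f y * k y * 2 ^ n), if_pos (toCube_mem b)]
    have hfx := hf (toCube b) (toCube_mem b)
    have hkx := hk (toCube b) (toCube_mem b)
    have h2 : f (toCube b) * (f (toCube b) * k (toCube b) * 2 ^ n)
        = k (toCube b) * 2 ^ n := by
      rcases hfx with h | h <;> rw [h] <;> ring
    rw [h2]
    positivity
  · rintro ⟨r, hr, hsign⟩
    refine ⟨fun x => f x * ∑ S : Finset (Fin n),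
      (if S ∈ M then ∑ y ∈ cube n, f y * chi S y * r y else 0) * chi S x,
      fun x hx => hsign x hx, ?_⟩
    intro T hT
    set a : Finset (Fin n) → ℝ :=
      fun S => if S ∈ M then ∑ y ∈ cube n, f y * chi S y * r y else 0 with ha
    have h1 : ∀ x ∈ cube n,
        (f x * ∑ S : Finset (Fin n), a S * chi S x) * f x * chi T x
          = ∑ S : Finset (Fin n), a S * (chi S x * chi T x) := by
      intro x hx
      rw [Finset.mul_sum, Finset.sum_mul, Finset.sum_mul]
      refine Finset.sum_congr rfl fun S _ => ?_
      rcases hf x hx with h | h <;> rw [h] <;> ring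
    rw [Finset.sum_congr rfl h1, Finset.sum_comm]
    have h2 : ∀ S : Finset (Fin n),
        ∑ x ∈ cube n, a S * (chi S x * chi T x)
          = if S = T then a S * 2 ^ n else 0 := by
      intro S
      rw [← Finset.mul_sum, orth_col]
      by_cases h : S = T
      · rw [if_pos h, if_pos h]
      · rw [if_neg h, if_neg h, mul_zero]
    rw [Finset.sum_congr rfl fun S _ => h2 S,
      Finset.sum_ite_eq' Finset.univ T (fun S => a S * 2 ^ n), if_pos (Finset.mem_univ T)]
    have : a T = 0 := if_neg hT
    rw [this, zero_mul]
end
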